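/- The spectrum of the discrete Dirichlet Laplacian h₊ on ℓ²(ℕ) is exactly the interval [-2,2], and h₊ has no eigenvalues (its spectrum is purely continuous). -/

import Mathlib

noncomputable abbrev L2 := lp (fun _ : ℕ => ℂ) 2

/-!
Write `h₊ = S + S†` with `S` the left shift on `ℓ²(ℕ)`. Since `‖S‖ ≤ 1`, `h₊` is self-adjoint of
norm at most `2`, so its spectrum lies in `[-2, 2]`. Conversely, for `t = 2 cos θ` with
`0 < θ < π` the sequence `sin ((n + 1) θ)` solves `h₊ u = t u` formally; its truncations to
`[0, N)` have residual of norm at most `2` but norm of order `√N`, so `t` is an approximate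
eigenvalue, and the endpoints `±2` follow since the spectrum is closed. An eigenvector would
solve `u (n + 2) = z u (n + 1) - u n` with `u 1 = z u 0`; this recurrence conserves the quadratic
form `u (n + 1) ^ 2 - z u (n + 1) u n + u n ^ 2`, whose initial value is `u 0 ^ 2` and which
tends to `0` along an `ℓ²` sequence, so `u = 0`.
-/

open Filter Topology Finset Real
open scoped InnerProductSpace InnerProduct lp

namespace lp

theorem tendsto_cofinite_zero {α E : Type*} [NormedAddCommGroup E] {p : ENNReal}
    (hp : 0 < p.toReal) (f : lp (fun _ : α => E) p) :
    Tendsto (fun i => f i) cofinite (𝓝 0) := by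
  rw [tendsto_zero_iff_norm_tendsto_zero]
  have h := (((lp.memℓp f).summable hp).tendsto_cofinite_zero).rpow_const
    (p := p.toReal⁻¹) (Or.inr (by positivity))
  simpa [rpow_rpow_inv (norm_nonneg _) hp.ne', zero_rpow (inv_ne_zero hp.ne')] using h

section Shift

variable {E : Type*} [NormedAddCommGroup E] {p : ENNReal}

theorem memℓp_comp_succ (hp : 0 < p.toReal) {f : ℕ → E} (hf : Memℓp f p) :
    Memℓp (fun n => f (n + 1)) p :=
  memℓp_gen ((hf.summable hp).comp_injective (add_left_injective 1))

def consZero (f : ℕ → E) : ℕ → E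
  | 0 => 0
  | n + 1 => f n

@[simp] theorem consZero_zero (f : ℕ → E) : consZero f 0 = 0 := rfl

@[simp] theorem consZero_succ (f : ℕ → E) (n : ℕ) : consZero f (n + 1) = f n := rfl

theorem tsum_norm_rpow_consZero (hp : 0 < p.toReal) {f : ℕ → E} (hf : Memℓp f p) :
    ∑' n, ‖consZero f n‖ ^ p.toReal = ∑' n, ‖f n‖ ^ p.toReal := by
  have hs : Summable fun n => ‖consZero f n‖ ^ p.toReal :=
    (summable_nat_add_iff 1).mp (hf.summable hp)
  rw [hs.tsum_eq_zero_add]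
  simp [zero_rpow hp.ne']

variable (𝕜 : Type*) [NontriviallyNormedField 𝕜] [NormedSpace 𝕜 E]

noncomputable def shiftLeft : ℓ²(ℕ, E) →L[𝕜] ℓ²(ℕ, E) :=
  LinearMap.mkContinuous
    { toFun := fun f => ⟨fun n => f (n + 1), memℓp_comp_succ (by norm_num) f.2⟩
      map_add' := fun _ _ => rfl
      map_smul' := fun _ _ => rfl }
    1 fun f => by
      rw [one_mul]
      refine norm_le_of_tsum_le (by norm_num) (norm_nonneg f) ?_
      rw [norm_rpow_eq_tsum (by norm_num)]
      exact tsum_comp_le_tsum_of_inj ((lp.memℓp f).summable (by norm_num))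
        (fun _ => by positivity) (add_left_injective 1)

noncomputable def shiftRight : ℓ²(ℕ, E) →L[𝕜] ℓ²(ℕ, E) :=
  LinearMap.mkContinuous
    { toFun := fun f =>
        ⟨consZero f, memℓp_gen <| (summable_nat_add_iff 1).mp ((lp.memℓp f).summable (by norm_num))⟩
      map_add' := fun f g => by
        ext (_ | n) <;> simp only [coeFn_add, Pi.add_apply, consZero_zero, consZero_succ, add_zero]
      map_smul' := fun c f => by
        ext (_ | n) <;>
          simp only [coeFn_smul, Pi.smul_apply, consZero_zero, consZero_succ, smul_zero,
            RingHom.id_apply] }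
    1 fun f => by
      rw [one_mul]
      refine norm_le_of_tsum_le (by norm_num) (norm_nonneg f) ?_
      rw [norm_rpow_eq_tsum (by norm_num)]
      exact (tsum_norm_rpow_consZero (by norm_num) (lp.memℓp f)).le

variable {𝕜}

@[simp] theorem shiftLeft_apply (f : ℓ²(ℕ, E)) (n : ℕ) : shiftLeft 𝕜 f n = f (n + 1) := rfl

@[simp] theorem shiftRight_apply_zero (f : ℓ²(ℕ, E)) : shiftRight 𝕜 f 0 = 0 := rfl

@[simp] theorem shiftRight_apply_succ (f : ℓ²(ℕ, E)) (n : ℕ) : shiftRight 𝕜 f (n + 1) = f n :=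
  rfl

theorem norm_shiftLeft_le : ‖shiftLeft 𝕜 (E := E)‖ ≤ 1 :=
  LinearMap.mkContinuous_norm_le _ zero_le_one _

theorem norm_shiftRight_le : ‖shiftRight 𝕜 (E := E)‖ ≤ 1 :=
  LinearMap.mkContinuous_norm_le _ zero_le_one _

end Shift

theorem adjoint_shiftRight {𝕜 E : Type*} [RCLike 𝕜] [NormedAddCommGroup E]
    [InnerProductSpace 𝕜 E] [CompleteSpace E] : (shiftRight 𝕜 (E := E))† = shiftLeft 𝕜 := by
  refine ((ContinuousLinearMap.eq_adjoint_iff _ _).mpr fun f g => ?_).symm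
  have hs : Summable fun n => ⟪f n, shiftRight 𝕜 g n⟫_𝕜 := summable_inner f (shiftRight 𝕜 g)
  rw [inner_eq_tsum, inner_eq_tsum, hs.tsum_eq_zero_add]
  simp

end lp

theorem eq_zero_of_recurrence_of_tendsto_zero {𝕜 : Type*} [NormedField 𝕜] {f : ℕ → 𝕜} {z : 𝕜}
    (h1 : f 1 = z * f 0) (hrec : ∀ n, f (n + 2) = z * f (n + 1) - f n)
    (hlim : Tendsto f atTop (𝓝 0)) : f = 0 := by
  set Q : ℕ → 𝕜 := fun n => f (n + 1) ^ 2 - z * f (n + 1) * f n + f n ^ 2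
  have hQ : ∀ n, Q n = f 0 ^ 2 := by
    intro n
    induction n with
    | zero => simp only [Q, zero_add, h1]; ring
    | succ n ih => rw [← ih]; simp only [Q, hrec]; ring
  have hQlim : Tendsto Q atTop (𝓝 0) := by
    have hsucc := hlim.comp (tendsto_add_atTop_nat 1)
    simpa using ((hsucc.pow 2).sub ((hsucc.const_mul z).mul hlim)).add (hlim.pow 2)
  have hf0 : f 0 = 0 := by
    rw [show Q = fun _ => f 0 ^ 2 from funext hQ] at hQlim
    exact pow_eq_zero_iff two_ne_zero |>.mp (tendsto_nhds_unique tendsto_const_nhds hQlim)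
  have hzero : ∀ n, f n = 0 ∧ f (n + 1) = 0 := by
    intro n
    induction n with
    | zero => exact ⟨hf0, by rw [h1, hf0, mul_zero]⟩
    | succ n ih => exact ⟨ih.2, by rw [hrec, ih.1, ih.2]; ring⟩
  exact funext fun n => (hzero n).1

theorem IsSelfAdjoint.spectrum_subset_image_Icc {A : Type*} [CStarAlgebra A] {a : A}
    (ha : IsSelfAdjoint a) : spectrum ℂ a ⊆ (↑) '' Set.Icc (-‖a‖) ‖a‖ := by
  intro z hz
  cases subsingleton_or_nontrivial A
  · simp [spectrum.of_subsingleton] at hz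
  refine ⟨z.re, abs_le.mp ?_, (ha.mem_spectrum_eq_re hz).symm⟩
  exact (Complex.abs_re_le_norm z).trans (spectrum.norm_le_norm_of_mem hz)

theorem spectrum.mem_of_forall_exists_norm_sub_lt {𝕜 E : Type*} [NontriviallyNormedField 𝕜]
    [NormedAddCommGroup E] [NormedSpace 𝕜 E] {T : E →L[𝕜] E} {k : 𝕜}
    (h : ∀ ε > 0, ∃ v, ‖k • v - T v‖ < ε * ‖v‖) : k ∈ spectrum 𝕜 T := by
  rintro ⟨U, hU⟩
  set R := ‖(↑U⁻¹ : E →L[𝕜] E)‖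
  obtain ⟨v, hv⟩ := h (R + 1)⁻¹ (by positivity)
  have hv0 : 0 < ‖v‖ := pos_of_mul_pos_right ((norm_nonneg _).trans_lt hv) (by positivity)
  have hinv : ‖v‖ ≤ R * ‖k • v - T v‖ := by
    have hUv : (↑U : E →L[𝕜] E) v = k • v - T v := by
      rw [hU]; simp [Algebra.algebraMap_eq_smul_one]
    calc ‖v‖ = ‖(↑U⁻¹ : E →L[𝕜] E) ((↑U : E →L[𝕜] E) v)‖ := by
          rw [← mul_apply_eq_comp, U.inv_mul, one_apply_eq_self]
      _ ≤ R * ‖k • v - T v‖ := by rw [hUv]; exact ContinuousLinearMap.le_opNorm _ _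
  have hR : R * (R + 1)⁻¹ < 1 := by
    rw [mul_inv_lt_iff₀ (by positivity)]; linarith
  refine lt_irrefl ‖v‖ ?_
  calc ‖v‖ ≤ R * ((R + 1)⁻¹ * ‖v‖) := hinv.trans (by gcongr)
    _ = R * (R + 1)⁻¹ * ‖v‖ := by ring
    _ < ‖v‖ := by nlinarith

theorem image_ofReal_Icc_subset {s : Set ℂ} (hs : IsClosed s) {a b : ℝ} (hab : a ≠ b)
    (h : (↑) '' Set.Ioo a b ⊆ s) : (↑) '' Set.Icc a b ⊆ s :=
  calc ((↑) '' Set.Icc a b : Set ℂ) = (↑) '' closure (Set.Ioo a b) := by rw [closure_Ioo hab]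
    _ ⊆ closure ((↑) '' Set.Ioo a b) :=
      image_closure_subset_closure_image Complex.continuous_ofReal
    _ ⊆ s := closure_minimal h hs

theorem two_mul_sin_mul_sum_range_sin_sq (θ : ℝ) (N : ℕ) :
    2 * sin θ * ∑ n ∈ range N, sin ((n + 1) * θ) ^ 2 =
      N * sin θ - (sin ((2 * N + 1) * θ) - sin θ) / 2 := by
  induction N with
  | zero => simp
  | succ N ih =>
    rw [sum_range_succ, mul_add, ih]
    have hnext : (2 * ((N + 1 : ℕ) : ℝ) + 1) * θ = 2 * ((N + 1) * θ) + θ := by push_cast; ring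
    have hprev : (2 * (N : ℝ) + 1) * θ = 2 * ((N + 1) * θ) - θ := by ring
    rw [hnext, hprev, sin_add, sin_sub, cos_two_mul, cos_sq']
    push_cast
    ring

theorem tendsto_sum_range_sin_sq {θ : ℝ} (hθ : 0 < sin θ) :
    Tendsto (fun N : ℕ => ∑ n ∈ range N, sin ((n + 1) * θ) ^ 2) atTop atTop := by
  refine tendsto_atTop_mono (fun N => ?_)
    ((tendsto_atTop_add_const_right _ (-1)
      (tendsto_natCast_atTop_atTop.atTop_mul_const hθ)).atTop_div_const
        (by positivity : 0 < 2 * sin θ))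
  rw [div_le_iff₀ (by positivity), mul_comm _ (2 * sin θ), two_mul_sin_mul_sum_range_sin_sq]
  linarith [sin_le_one ((2 * N + 1) * θ), neg_one_le_sin θ]

section HalfLineLaplacian

variable {𝕜 : Type*} [RCLike 𝕜]

variable (𝕜) in
noncomputable def halfLineLaplacian : ℓ²(ℕ, 𝕜) →L[𝕜] ℓ²(ℕ, 𝕜) :=
  lp.shiftLeft 𝕜 + lp.shiftRight 𝕜

@[simp] theorem halfLineLaplacian_apply_zero (u : ℓ²(ℕ, 𝕜)) :
    halfLineLaplacian 𝕜 u 0 = u 1 := by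
  simp [halfLineLaplacian]

@[simp] theorem halfLineLaplacian_apply_succ (u : ℓ²(ℕ, 𝕜)) (n : ℕ) :
    halfLineLaplacian 𝕜 u (n + 1) = u (n + 2) + u n := by
  simp [halfLineLaplacian]

theorem eq_halfLineLaplacian {H : ℓ²(ℕ, 𝕜) →L[𝕜] ℓ²(ℕ, 𝕜)} (hH0 : ∀ u, H u 0 = u 1)
    (hHn : ∀ u n, H u (n + 1) = u (n + 2) + u n) : H = halfLineLaplacian 𝕜 := by
  refine ContinuousLinearMap.ext fun u => lp.ext (funext fun n => ?_)
  cases n <;> simp [hH0, hHn]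

theorem isSelfAdjoint_halfLineLaplacian : IsSelfAdjoint (halfLineLaplacian 𝕜) := by
  rw [halfLineLaplacian, ← lp.adjoint_shiftRight]
  exact IsSelfAdjoint.star_add_self _

theorem norm_halfLineLaplacian_le : ‖halfLineLaplacian 𝕜‖ ≤ 2 :=
  calc ‖halfLineLaplacian 𝕜‖ ≤ ‖lp.shiftLeft 𝕜 (E := 𝕜)‖ + ‖lp.shiftRight 𝕜 (E := 𝕜)‖ :=
        norm_add_le _ _
    _ ≤ 1 + 1 := add_le_add lp.norm_shiftLeft_le lp.norm_shiftRight_le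
    _ = 2 := one_add_one_eq_two

theorem eq_zero_of_halfLineLaplacian_apply_eq_smul {z : 𝕜} {u : ℓ²(ℕ, 𝕜)}
    (h : halfLineLaplacian 𝕜 u = z • u) : u = 0 := by
  have hcoord (n : ℕ) : halfLineLaplacian 𝕜 u n = z * u n := by rw [h]; rfl
  refine lp.ext (eq_zero_of_recurrence_of_tendsto_zero (z := z) ?_ (fun n => ?_) ?_)
  · simpa using hcoord 0
  · linear_combination (halfLineLaplacian_apply_succ u n).symm.trans (hcoord (n + 1))
  · simpa [Nat.cofinite_eq_atTop] using lp.tendsto_cofinite_zero (by norm_num) u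

noncomputable def truncSine (θ : ℝ) (N : ℕ) : ℓ²(ℕ, 𝕜) :=
  ∑ n ∈ range N, lp.single 2 n (sin ((n + 1) * θ) : 𝕜)

theorem truncSine_apply (θ : ℝ) (N n : ℕ) :
    (truncSine θ N : ℓ²(ℕ, 𝕜)) n = if n < N then (sin ((n + 1) * θ) : 𝕜) else 0 := by
  simp only [truncSine, lp.coeFn_single, lp.coeFn_sum, Finset.sum_apply, Finset.sum_pi_single,
    mem_range]

theorem norm_truncSine_sq (θ : ℝ) (N : ℕ) :
    ‖(truncSine θ N : ℓ²(ℕ, 𝕜))‖ ^ 2 = ∑ n ∈ range N, sin ((n + 1) * θ) ^ 2 := by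
  simpa [truncSine] using
    lp.norm_sum_single (p := 2) (by norm_num) (fun n : ℕ => (sin ((n + 1) * θ) : 𝕜)) (range N)

theorem smul_truncSine_sub_halfLineLaplacian (θ : ℝ) (N : ℕ) :
    ((2 * cos θ : ℝ) : 𝕜) • truncSine θ (N + 1) - halfLineLaplacian 𝕜 (truncSine θ (N + 1)) =
      lp.single 2 N (sin ((N + 2) * θ) : 𝕜) - lp.single 2 (N + 1) (sin ((N + 1) * θ) : 𝕜) := by
  have hrec (x : ℝ) : (sin (x + θ) : 𝕜) + sin (x - θ) = 2 * cos θ * sin x := by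
    rw [sin_add, sin_sub]; push_cast; ring
  have hdouble : (sin (2 * θ) : 𝕜) = 2 * cos θ * sin θ := by
    rw [sin_two_mul]; push_cast; ring
  refine lp.ext (funext fun n => ?_)
  simp only [lp.coeFn_sub, lp.coeFn_smul, Pi.sub_apply, Pi.smul_apply, smul_eq_mul,
    lp.single_apply, Pi.single_apply]
  rcases n with _ | m
  · simp only [halfLineLaplacian_apply_zero, truncSine_apply]
    rcases N with _ | N <;> split_ifs <;> first | omega | contradiction | push_cast
    · linear_combination (norm := ring_nf) -hdouble
    · linear_combination (norm := ring_nf) -hdouble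
  · simp only [halfLineLaplacian_apply_succ, truncSine_apply]
    obtain hlt | rfl | rfl | hgt : m + 1 < N ∨ m + 1 = N ∨ m = N ∨ N < m := by omega
    all_goals split_ifs <;> first | omega | push_cast
    · linear_combination (norm := ring_nf) -hrec ((m + 2) * θ)
    · linear_combination (norm := ring_nf) -hrec ((m + 2) * θ)
    · ring
    · ring

theorem norm_smul_truncSine_sub_halfLineLaplacian_le (θ : ℝ) (N : ℕ) :
    ‖((2 * cos θ : ℝ) : 𝕜) • truncSine θ (N + 1) - halfLineLaplacian 𝕜 (truncSine θ (N + 1))‖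
      ≤ 2 := by
  rw [smul_truncSine_sub_halfLineLaplacian]
  refine (norm_sub_le _ _).trans ?_
  simp only [lp.norm_single (p := 2) (by norm_num), RCLike.norm_ofReal]
  linarith [abs_sin_le_one ((N + 2) * θ), abs_sin_le_one ((N + 1) * θ)]

theorem ofReal_mem_spectrum_halfLineLaplacian {t : ℝ} (ht : t ∈ Set.Ioo (-2) 2) :
    (t : 𝕜) ∈ spectrum 𝕜 (halfLineLaplacian 𝕜) := by
  obtain ⟨ht₁, ht₂⟩ := ht
  set θ := arccos (t / 2)
  have hcos : 2 * cos θ = t := by rw [cos_arccos (by linarith) (by linarith)]; ring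
  have hsin : 0 < sin θ := by
    rw [sin_arccos]
    exact sqrt_pos.mpr (by nlinarith)
  refine spectrum.mem_of_forall_exists_norm_sub_lt fun ε hε => ?_
  obtain ⟨N, hN⟩ := (((tendsto_sum_range_sin_sq hsin).comp
    (tendsto_add_atTop_nat 1)).eventually_gt_atTop ((2 / ε) ^ 2)).exists
  refine ⟨truncSine θ (N + 1), ?_⟩
  have hnorm : 2 / ε < ‖(truncSine θ (N + 1) : ℓ²(ℕ, 𝕜))‖ := by
    refine lt_of_pow_lt_pow_left₀ 2 (norm_nonneg _) ?_
    rw [norm_truncSine_sq]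
    exact hN
  calc ‖(t : 𝕜) • truncSine θ (N + 1) - halfLineLaplacian 𝕜 (truncSine θ (N + 1))‖ ≤ 2 := by
        rw [← hcos]; exact norm_smul_truncSine_sub_halfLineLaplacian_le θ N
    _ < ε * ‖(truncSine θ (N + 1) : ℓ²(ℕ, 𝕜))‖ := by rwa [← div_lt_iff₀' hε]

end HalfLineLaplacian

theorem spectrum_halfLineLaplacian :
    spectrum ℂ (halfLineLaplacian ℂ) = (↑) '' Set.Icc (-2 : ℝ) 2 := by
  refine Set.Subset.antisymm ?_ ?_
  · exact isSelfAdjoint_halfLineLaplacian.spectrum_subset_image_Icc.trans <| Set.image_mono <|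
      Set.Icc_subset_Icc (neg_le_neg norm_halfLineLaplacian_le) norm_halfLineLaplacian_le
  · refine image_ofReal_Icc_subset (spectrum.isClosed _) (by norm_num) ?_
    rintro _ ⟨t, ht, rfl⟩
    exact ofReal_mem_spectrum_halfLineLaplacian ht

/-- The spectrum of the half-line Dirichlet Laplacian `h₊` on ℓ²(ℕ) is exactly `[-2,2]`,
and `h₊` has no eigenvalues. -/
theorem stmt4 (H : L2 →L[ℂ] L2)
    (hH0 : ∀ u : L2, (H u : ∀ _ : ℕ, ℂ) 0 = (u : ∀ _ : ℕ, ℂ) 1)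
    (hHn : ∀ u : L2, ∀ n : ℕ,
      (H u : ∀ _ : ℕ, ℂ) (n + 1) = (u : ∀ _ : ℕ, ℂ) (n + 2) + (u : ∀ _ : ℕ, ℂ) n) :
    spectrum ℂ H = (fun t : ℝ => (t : ℂ)) '' Set.Icc (-2 : ℝ) 2 ∧
    ∀ (z : ℂ) (u : L2), H u = z • u → u = 0 := by
  obtain rfl := eq_halfLineLaplacian hH0 hHn
  exact ⟨spectrum_halfLineLaplacian, fun _ _ => eq_zero_of_halfLineLaplacian_apply_eq_smul⟩
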